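/- Let π be a group, H a normal subgroup of π of finite index, and K a subgroup of H. Then the action of H by left multiplication on the coset space π/K is amenable if and only if the action of H by left multiplication on the coset space H/K is amenable. -/

import Mathlib

/-- A real-valued function is bounded. -/
def Bdd {X : Type*} (f : X → ℝ) : Prop := ∃ C : ℝ, ∀ x, |f x| ≤ C

/-- `μ` is a `Γ`-invariant mean for the action of `Γ` on `X`: an ℝ-linear functional on
the space of bounded functions `X → ℝ` lying between the infimum and the supremum, and
invariant under the action of `Γ`. -/
def IsInvariantMean (Γ : Type*) {X : Type*} [Group Γ] [MulAction Γ X]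
    (μ : (X → ℝ) → ℝ) : Prop :=
  (∀ f g : X → ℝ, Bdd f → Bdd g → μ (f + g) = μ f + μ g) ∧
  (∀ (c : ℝ) (f : X → ℝ), Bdd f → μ (c • f) = c * μ f) ∧
  (∀ f : X → ℝ, Bdd f → sInf (Set.range f) ≤ μ f ∧ μ f ≤ sSup (Set.range f)) ∧
  (∀ (g : Γ) (f : X → ℝ), Bdd f → μ (fun x => f (g • x)) = μ f)

/-- The action of `Γ` on `X` is amenable if it admits a `Γ`-invariant mean. -/
def AmenableAction (Γ X : Type*) [Group Γ] [MulAction Γ X] : Prop :=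
  ∃ μ : (X → ℝ) → ℝ, IsInvariantMean Γ μ

/-- A group is amenable if its action on itself by left multiplication is amenable. -/
def AmenableGroup (G : Type*) [Group G] : Prop := AmenableAction G G

/-! The coset space `π ⧸ K` is the disjoint union of the fibres of `π ⧸ K → π ⧸ H`, finitely
many since `H` has finite index. As `H` is normal, each fibre `g H ⧸ K` is `H`-invariant, and
`g h K ↦ h K` identifies it with `H ⧸ K`, the action of `h` becoming that of `g⁻¹ h g`. An
`H`-invariant mean on `π ⧸ K` gives positive mass to some fibre, and renormalising its restriction
there gives a mean on `H ⧸ K`; conversely a mean on `H ⧸ K` is pushed forward along the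
inclusion `H ⧸ K → π ⧸ K`. -/

namespace Bdd

variable {X : Type*} {f g : X → ℝ}

lemma add (hf : Bdd f) (hg : Bdd g) : Bdd (f + g) := by
  obtain ⟨C, hC⟩ := hf
  obtain ⟨D, hD⟩ := hg
  exact ⟨C + D, fun x => (abs_add_le _ _).trans (add_le_add (hC x) (hD x))⟩

lemma smul (c : ℝ) (hf : Bdd f) : Bdd (c • f) := by
  obtain ⟨C, hC⟩ := hf
  refine ⟨|c| * C, fun x => ?_⟩
  rw [Pi.smul_apply, smul_eq_mul, abs_mul]
  exact mul_le_mul_of_nonneg_left (hC x) (abs_nonneg c)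

lemma sub (hf : Bdd f) (hg : Bdd g) : Bdd (f - g) := by
  simpa only [sub_eq_add_neg, neg_one_smul] using hf.add (hg.smul (-1))

lemma const (c : ℝ) : Bdd (fun _ : X => c) := ⟨|c|, fun _ => le_rfl⟩

lemma sum {ι : Type*} (s : Finset ι) {F : ι → X → ℝ} (hF : ∀ i, Bdd (F i)) :
    Bdd (∑ i ∈ s, F i) :=
  Finset.sum_induction F Bdd (fun _ _ => add) (const 0) fun i _ => hF i

lemma comp {Y : Type*} (hf : Bdd f) (φ : Y → X) : Bdd (f ∘ φ) := by
  obtain ⟨C, hC⟩ := hf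
  exact ⟨C, fun y => hC (φ y)⟩

lemma indicator (hf : Bdd f) (S : Set X) : Bdd (S.indicator f) := by
  obtain ⟨C, hC⟩ := hf
  refine ⟨max C 0, fun x => ?_⟩
  by_cases hx : x ∈ S
  · rw [Set.indicator_of_mem hx]
    exact (hC x).trans (le_max_left _ _)
  · simp [hx]

lemma bddBelow_range (hf : Bdd f) : BddBelow (Set.range f) := by
  obtain ⟨C, hC⟩ := hf
  exact ⟨-C, fun _ ⟨x, hx⟩ => hx ▸ neg_le_of_abs_le (hC x)⟩

lemma bddAbove_range (hf : Bdd f) : BddAbove (Set.range f) := by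
  obtain ⟨C, hC⟩ := hf
  exact ⟨C, fun _ ⟨x, hx⟩ => hx ▸ le_of_abs_le (hC x)⟩

end Bdd

namespace IsInvariantMean

variable {Γ X : Type*} [Group Γ] [MulAction Γ X] {μ : (X → ℝ) → ℝ}

lemma map_sub (hμ : IsInvariantMean Γ μ) {f g : X → ℝ} (hf : Bdd f) (hg : Bdd g) :
    μ (f - g) = μ f - μ g := by
  have h := hμ.1 (f - g) g (hf.sub hg) hg
  rw [sub_add_cancel] at h
  linarith

lemma map_zero (hμ : IsInvariantMean Γ μ) : μ 0 = 0 := by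
  simpa using hμ.2.1 0 (0 : X → ℝ) (Bdd.const 0)

lemma mono (hμ : IsInvariantMean Γ μ) {f g : X → ℝ} (hf : Bdd f) (hg : Bdd g) (hfg : f ≤ g) :
    μ f ≤ μ g := by
  have h : 0 ≤ μ (g - f) :=
    (Real.sInf_nonneg (s := Set.range (g - f)) fun _ ⟨x, hx⟩ => hx ▸ sub_nonneg.2 (hfg x)).trans
      (hμ.2.2.1 _ (hg.sub hf)).1
  rw [hμ.map_sub hg hf] at h
  linarith

lemma map_const [Nonempty X] (hμ : IsInvariantMean Γ μ) (c : ℝ) : μ (fun _ => c) = c := by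
  have h := hμ.2.2.1 _ (Bdd.const c)
  rw [Set.range_const, csInf_singleton, csSup_singleton] at h
  exact le_antisymm h.2 h.1

lemma map_sum (hμ : IsInvariantMean Γ μ) {ι : Type*} (s : Finset ι) {F : ι → X → ℝ}
    (hF : ∀ i, Bdd (F i)) : μ (∑ i ∈ s, F i) = ∑ i ∈ s, μ (F i) := by
  classical
  induction s using Finset.induction_on with
  | empty => simpa using hμ.map_zero
  | insert i s hi ih =>
    rw [Finset.sum_insert hi, Finset.sum_insert hi, hμ.1 _ _ (hF i) (Bdd.sum s hF), ih]

lemma exists_pos_fiber [Nonempty X] (hμ : IsInvariantMean Γ μ) {Q : Type*} [Finite Q]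
    (q : X → Q) : ∃ c, 0 < μ ((q ⁻¹' {c}).indicator 1) := by
  classical
  have := Fintype.ofFinite Q
  by_contra! hnonpos
  have hpartition : ∑ c, (q ⁻¹' {c}).indicator (1 : X → ℝ) = fun _ => 1 := by
    funext x
    simp [Set.indicator_apply, eq_comm]
  have hbdd : ∀ c, Bdd ((q ⁻¹' {c}).indicator (1 : X → ℝ)) := fun c =>
    ⟨1, fun x => by by_cases hx : x ∈ q ⁻¹' {c} <;> simp [hx]⟩
  have h := hμ.map_sum Finset.univ hbdd
  rw [hpartition, hμ.map_const] at h
  linarith [Finset.sum_nonpos fun c (_ : c ∈ Finset.univ) => hnonpos c]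

end IsInvariantMean

theorem AmenableAction.of_intertwining {Γ Γ' X Y : Type*} [Group Γ] [MulAction Γ X]
    [Group Γ'] [MulAction Γ' Y] [Nonempty Y] (φ : Y → X)
    (hφ : ∀ g : Γ, ∃ g' : Γ', ∀ y, φ (g' • y) = g • φ y) (hY : AmenableAction Γ' Y) :
    AmenableAction Γ X := by
  obtain ⟨ν, hν⟩ := hY
  refine ⟨fun F => ν (F ∘ φ), fun F G hF hG => hν.1 _ _ (hF.comp φ) (hG.comp φ),
    fun c F hF => hν.2.1 c _ (hF.comp φ), fun F hF => ?_, fun g F hF => ?_⟩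
  · have hsub : Set.range (F ∘ φ) ⊆ Set.range F := Set.range_comp_subset_range φ F
    have hne : (Set.range (F ∘ φ)).Nonempty := Set.range_nonempty _
    exact ⟨(csInf_le_csInf hF.bddBelow_range hne hsub).trans (hν.2.2.1 _ (hF.comp φ)).1,
      (hν.2.2.1 _ (hF.comp φ)).2.trans (csSup_le_csSup hF.bddAbove_range hne hsub)⟩
  · obtain ⟨g', hg'⟩ := hφ g
    have h := hν.2.2.2 g' _ (hF.comp φ)
    simp only [Function.comp_apply, hg'] at h
    exact h

/-- The mean of `f : Y → ℝ` is that of `f ∘ ρ` on `S`, normalised by the mass of `S`. -/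
theorem IsInvariantMean.amenableAction_of_indicator_pos {Γ Γ' X Y : Type*} [Group Γ]
    [MulAction Γ X] [Group Γ'] [MulAction Γ' Y] {μ : (X → ℝ) → ℝ} (hμ : IsInvariantMean Γ μ)
    {S : Set X} (hS : ∀ (g : Γ) x, g • x ∈ S ↔ x ∈ S) (hSμ : 0 < μ (S.indicator 1))
    (ρ : X → Y) (hρ : ∀ g' : Γ', ∃ g : Γ, ∀ x ∈ S, ρ (g • x) = g' • ρ x) :
    AmenableAction Γ' Y := by
  have hbdd : ∀ f : Y → ℝ, Bdd f → Bdd (S.indicator (f ∘ ρ)) := fun f hf => (hf.comp ρ).indicator S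
  have h1 : Bdd (S.indicator (1 : X → ℝ)) := (Bdd.const 1).indicator S
  have hbounds : ∀ f : Y → ℝ, Bdd f → sInf (Set.range f) • S.indicator 1 ≤ S.indicator (f ∘ ρ) ∧
      S.indicator (f ∘ ρ) ≤ sSup (Set.range f) • S.indicator 1 := by
    intro f hf
    refine ⟨fun x => ?_, fun x => ?_⟩ <;> by_cases hx : x ∈ S
    · simpa [hx] using csInf_le hf.bddBelow_range (Set.mem_range_self (ρ x))
    · simp [hx]
    · simpa [hx] using le_csSup hf.bddAbove_range (Set.mem_range_self (ρ x))
    · simp [hx]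
  refine ⟨fun f => μ (S.indicator (f ∘ ρ)) / μ (S.indicator 1), fun f g hf hg => ?_,
    fun c f hf => ?_, fun f hf => ?_, fun g' f hf => ?_⟩
  · dsimp only
    rw [show (f + g) ∘ ρ = f ∘ ρ + g ∘ ρ from rfl, Set.indicator_add',
      hμ.1 _ _ (hbdd f hf) (hbdd g hg), add_div]
  · dsimp only
    rw [show S.indicator ((c • f) ∘ ρ) = c • S.indicator (f ∘ ρ) from
      Set.indicator_const_smul S c (f ∘ ρ), hμ.2.1 c _ (hbdd f hf), mul_div_assoc]
  · dsimp only
    rw [le_div_iff₀ hSμ, div_le_iff₀ hSμ, ← hμ.2.1 _ _ h1, ← hμ.2.1 _ _ h1]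
    exact ⟨hμ.mono (h1.smul _) (hbdd f hf) (hbounds f hf).1,
      hμ.mono (hbdd f hf) (h1.smul _) (hbounds f hf).2⟩
  · obtain ⟨g, hg⟩ := hρ g'
    have hshift :
        S.indicator ((fun y => f (g' • y)) ∘ ρ) = fun x => S.indicator (f ∘ ρ) (g • x) := by
      funext x
      by_cases hx : x ∈ S
      · simp [hx, hS, hg x hx]
      · simp [hx, hS]
    dsimp only
    rw [hshift, hμ.2.2.2 g _ (hbdd f hf)]

section Cosets

variable {π : Type*} [Group π]

def quotientSubgroupOfToQuotient (K H : Subgroup π) : H ⧸ K.subgroupOf H → π ⧸ K :=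
  Quotient.map' Subtype.val fun _ _ h => by
    rw [QuotientGroup.leftRel_apply, Subgroup.mem_subgroupOf] at h
    exact QuotientGroup.leftRel_apply.2 h

lemma quotientSubgroupOfToQuotient_smul {K H : Subgroup π} (h : H) (y : H ⧸ K.subgroupOf H) :
    quotientSubgroupOfToQuotient K H (h • y) = h • quotientSubgroupOfToQuotient K H y := by
  induction y using QuotientGroup.induction_on
  rfl

theorem AmenableAction.quotient_of_quotientSubgroupOf (K H : Subgroup π)
    (hH : AmenableAction H (H ⧸ K.subgroupOf H)) : AmenableAction H (π ⧸ K) :=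
  hH.of_intertwining (quotientSubgroupOfToQuotient K H) fun h =>
    ⟨h, quotientSubgroupOfToQuotient_smul h⟩

variable {K H : Subgroup π} [H.Normal]

lemma quotientEquivProdOfLE_fst_smul (hKH : K ≤ H) {k : π} (hk : k ∈ H) (x : π ⧸ K) :
    (Subgroup.quotientEquivProdOfLE hKH (k • x)).1 = (Subgroup.quotientEquivProdOfLE hKH x).1 := by
  induction x using QuotientGroup.induction_on with | _ a =>
  change ((k * a : π) : π ⧸ H) = a
  rw [QuotientGroup.mk_mul, (QuotientGroup.eq_one_iff k).2 hk, one_mul]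

lemma quotientEquivProdOfLE_snd_conj_smul (hKH : K ≤ H) {c : π ⧸ H} (h : H) {x : π ⧸ K}
    (hx : (Subgroup.quotientEquivProdOfLE hKH x).1 = c) :
    (Subgroup.quotientEquivProdOfLE hKH ((c.out * h * c.out⁻¹ : π) • x)).2 =
      h • (Subgroup.quotientEquivProdOfLE hKH x).2 := by
  subst hx
  induction x using QuotientGroup.induction_on with | _ a =>
  set r := (a : π ⧸ H).out
  have hconj : r * h * r⁻¹ ∈ H := Subgroup.Normal.conj_mem ‹_› _ h.2 r
  have hout : ((r * h * r⁻¹ * a : π) : π ⧸ H).out = r :=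
    congrArg Quotient.out (quotientEquivProdOfLE_fst_smul hKH hconj (a : π ⧸ K))
  change ((⟨_, _⟩ : H) : H ⧸ K.subgroupOf H) = ((h * ⟨r⁻¹ * a, _⟩ : H) : H ⧸ _)
  congr 1
  ext
  change ((r * h * r⁻¹ * a : π) : π ⧸ H).out⁻¹ * (r * h * r⁻¹ * a) = h * (r⁻¹ * a)
  rw [hout]
  group

theorem AmenableAction.quotientSubgroupOf_of_quotient [H.FiniteIndex] (hKH : K ≤ H)
    (hπ : AmenableAction H (π ⧸ K)) : AmenableAction H (H ⧸ K.subgroupOf H) := by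
  obtain ⟨μ, hμ⟩ := hπ
  let e := Subgroup.quotientEquivProdOfLE hKH
  obtain ⟨c, hc⟩ := hμ.exists_pos_fiber fun x => (e x).1
  refine hμ.amenableAction_of_indicator_pos (fun k x => ?_) hc (fun x => (e x).2) fun h =>
    ⟨⟨c.out * h * c.out⁻¹, Subgroup.Normal.conj_mem ‹_› _ h.2 _⟩, fun x hx => ?_⟩
  · change (e ((k : π) • x)).1 ∈ ({c} : Set _) ↔ (e x).1 ∈ ({c} : Set _)
    rw [quotientEquivProdOfLE_fst_smul hKH k.2]
  · exact quotientEquivProdOfLE_snd_conj_smul hKH h hx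

end Cosets

/-- If `H` is a normal subgroup of `π` of finite index and `K ≤ H`, then the action of `H`
by left multiplication on `π ⧸ K` is amenable iff the action of `H` by left multiplication
on `H ⧸ K` is amenable. -/
theorem amenableAction_quotient_iff_of_finiteIndex (π : Type*) [Group π]
    (K H : Subgroup π) (hKH : K ≤ H) [H.Normal] [H.FiniteIndex] :
    AmenableAction H (π ⧸ K) ↔ AmenableAction H (H ⧸ K.subgroupOf H) :=
  ⟨AmenableAction.quotientSubgroupOf_of_quotient hKH,
    AmenableAction.quotient_of_quotientSubgroupOf K H⟩
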